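/- arXiv:0904.4778 — 2 statements merged into one kernel-verified Lean document; each statement's English description precedes it below -/
import Mathlib

section
/- Let λ, μ, ν, λ', μ', ν' be partitions with c(λ';μ',ν') ≠ 0. Then for every n ≥ 0, c(nλ+λ'; nμ+μ', nν+ν') ≥ c(nλ; nμ, nν). -/
/-- A partition: a weakly decreasing sequence of naturals with finitely many
nonzero terms.  `parts i` is the `(i+1)`-st part `λ_{i+1}`. -/
structure LRPartition where
  parts : ℕ → ℕ
  antitone' : ∀ ⦃i j : ℕ⦄, i ≤ j → parts j ≤ parts i
  eventually_zero : ∃ N, ∀ i, N ≤ i → parts i = 0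

namespace LRPartition

/-- Componentwise sum `λ + μ`. -/
def add (a b : LRPartition) : LRPartition where
  parts i := a.parts i + b.parts i
  antitone' := fun _ _ h => Nat.add_le_add (a.antitone' h) (b.antitone' h)
  eventually_zero := by
    obtain ⟨M, hM⟩ := a.eventually_zero
    obtain ⟨N, hN⟩ := b.eventually_zero
    refine ⟨max M N, fun i hi => ?_⟩
    show a.parts i + b.parts i = 0
    rw [hM i (le_trans (le_max_left M N) hi), hN i (le_trans (le_max_right M N) hi)]

instance : Add LRPartition := ⟨add⟩

@[simp] theorem add_parts (a b : LRPartition) (i : ℕ) :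
    (a + b).parts i = a.parts i + b.parts i := rfl

/-- The stretched partition `n • λ = (nλ₁, nλ₂, …)`. -/
def stretch (n : ℕ) (a : LRPartition) : LRPartition where
  parts i := n * a.parts i
  antitone' := fun _ _ h => Nat.mul_le_mul_left n (a.antitone' h)
  eventually_zero := by
    obtain ⟨N, hN⟩ := a.eventually_zero
    exact ⟨N, fun i hi => by show n * a.parts i = 0; rw [hN i hi, Nat.mul_zero]⟩

instance : SMul ℕ LRPartition := ⟨stretch⟩

@[simp] theorem smul_parts (n : ℕ) (a : LRPartition) (i : ℕ) :
    (n • a).parts i = n * a.parts i := rfl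

/-- Containment of Young diagrams: `μ ⊆ λ` iff `μᵢ ≤ λᵢ` for all `i`. -/
def Sub (m l : LRPartition) : Prop := ∀ i, m.parts i ≤ l.parts i

/-- The number of (nonzero) parts, `l(λ)`. -/
noncomputable def length (a : LRPartition) : ℕ := {i | a.parts i ≠ 0}.ncard

end LRPartition

/-- `u = λ ∪ λ'`: the multiset of (positive) parts of `u` is the multiset union of
those of `λ` and `λ'`, expressed via multiplicities of every positive value `t`. -/
def IsUnion (a b u : LRPartition) : Prop :=
  ∀ t : ℕ, 0 < t →
    {i | u.parts i = t}.ncard = {i | a.parts i = t}.ncard + {i | b.parts i = t}.ncard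

/-- The cells of the skew diagram `λ/μ`: boxes `(i, j)` (row `i`, column `j`,
both 0-indexed) with `μ_{i+1} ≤ j < λ_{i+1}`. -/
def skewCells (l m : LRPartition) : Set (ℕ × ℕ) :=
  {p | m.parts p.1 ≤ p.2 ∧ p.2 < l.parts p.1}

/-- `T` is a Littlewood–Richardson tableau of shape `λ/μ` and content `ν`.
`T (i, j)` records the entry in box `(i, j)`; boxes carry positive integers and `T`
vanishes off the diagram.  Rows weakly increase, columns strictly increase, the entry
`k + 1` occurs `ν_{k+1} = ν.parts k` times, and the lattice-word condition on the
reverse reading word is expressed via its initial segments: for every `r c`, the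
cells read up to position `(r, c)` are exactly those in rows `< r` together with
those in row `r` in columns `≥ c`. -/
structure IsLRTableau (l m n : LRPartition) (T : ℕ × ℕ → ℕ) : Prop where
  sub : LRPartition.Sub m l
  pos : ∀ p ∈ skewCells l m, 0 < T p
  zero : ∀ p, p ∉ skewCells l m → T p = 0
  row_weak : ∀ i j j', (i, j) ∈ skewCells l m → (i, j') ∈ skewCells l m →
    j ≤ j' → T (i, j) ≤ T (i, j')
  col_strict : ∀ i i' j, (i, j) ∈ skewCells l m → (i', j) ∈ skewCells l m →
    i < i' → T (i, j) < T (i', j)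
  content : ∀ k : ℕ, {p ∈ skewCells l m | T p = k + 1}.ncard = n.parts k
  lattice : ∀ r c k : ℕ, 0 < k →
    {p ∈ skewCells l m | (p.1 < r ∨ (p.1 = r ∧ c ≤ p.2)) ∧ T p = k + 1}.ncard ≤
      {p ∈ skewCells l m | (p.1 < r ∨ (p.1 = r ∧ c ≤ p.2)) ∧ T p = k}.ncard

/-- The Littlewood–Richardson coefficient `c(λ; μ, ν)`: the number of LR tableaux of
shape `λ/μ` and content `ν` (zero when `μ ⊄ λ`). -/
noncomputable def LRcoeff (l m n : LRPartition) : ℕ :=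
  Set.ncard {T : ℕ × ℕ → ℕ | IsLRTableau l m n T}

/-- `λ/μ` is a partition shape: `μᵢ = 0` in every nonempty row. -/
def IsPartitionShape (l m : LRPartition) : Prop :=
  ∀ i, m.parts i < l.parts i → m.parts i = 0

/-- `λ/μ` is a rotated partition shape: `λᵢ` takes the same value in all nonempty rows. -/
def IsRotatedShape (l m : LRPartition) : Prop :=
  ∀ i j, m.parts i < l.parts i → m.parts j < l.parts j → l.parts i = l.parts j

/-- A proper skew diagram: neither a partition shape nor a rotated partition. -/
def IsProperSkew (l m : LRPartition) : Prop :=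
  ¬ IsPartitionShape l m ∧ ¬ IsRotatedShape l m

/-- `λ/μ` is a basic skew diagram: `μᵢ < λᵢ` and `μᵢ ≤ λ_{i+1}` for each
`1 ≤ i ≤ l(λ)` (no empty rows or columns). -/
def IsBasicSkew (l m : LRPartition) : Prop :=
  ∀ i, 0 < l.parts i → m.parts i < l.parts i ∧ m.parts i ≤ l.parts (i + 1)

/-- `Q^{λ,μ}_{λ',μ'}(n) = Σ_ν c(nλ+λ'; nμ+μ', ν)`, the sum over all partitions `ν`. -/
noncomputable def Qfun (l m l' m' : LRPartition) (n : ℕ) : ℕ :=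
  ∑ᶠ ν : LRPartition, LRcoeff (n • l + l') (n • m + m') ν

/-- `P^{λ,μ,ν}_{λ',μ',ν'}(n) = c(nλ+λ'; nμ+μ', nν+ν')`. -/
noncomputable def Pfun (l m nu l' m' nu' : LRPartition) (n : ℕ) : ℕ :=
  LRcoeff (n • l + l') (n • m + m') (n • nu + nu')

/-- The partition `(1^a)` consisting of `a` parts equal to `1`. -/
def onesPartition (a : ℕ) : LRPartition where
  parts i := if i < a then 1 else 0
  antitone' := by intro i j h; (try dsimp only); split_ifs <;> omega
  eventually_zero := ⟨a, fun i hi => by (try dsimp only); split_ifs <;> omega⟩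

/-- The partition `(a)` with a single part `a` (the empty partition if `a = 0`). -/
def singlePartition (a : ℕ) : LRPartition where
  parts i := if i = 0 then a else 0
  antitone' := by intro i j h; (try dsimp only); split_ifs <;> omega
  eventually_zero := ⟨1, fun i hi => by (try dsimp only); split_ifs <;> omega⟩
/-!
An LR tableau of shape `λ/μ` is determined by its row-content matrix `M`, where `M i k` counts
the entries `k + 1` in row `i`: the entries of row `i` are sorted, so they are recovered from the
boundaries `μᵢ + M i 0 + ⋯ + M i (t - 1)`. The matrices that occur are exactly the solutions of a
system of linear inequalities whose right-hand sides are linear in `(λ, μ, ν)` (row lengths,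
column strictness as inequalities between boundaries of consecutive rows, content, lattice
condition). Such solutions add up, so adding the matrix of one fixed LR tableau of shape
`λ'/μ'` and content `ν'` injects the LR tableaux of shape `λ/μ` and content `ν` into those of
shape `(λ + λ')/(μ + μ')` and content `ν + ν'`. The theorem is the case `(nλ, nμ, nν)`.
-/

namespace LittlewoodRichardson

open Finset Filter

lemma ncard_eq_sum_ncard_rows {S : Set (ℕ × ℕ)} (hS : S.Finite) {R : ℕ}
    (hR : ∀ p ∈ S, p.1 < R) : S.ncard = ∑ i ∈ range R, {j | (i, j) ∈ S}.ncard := by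
  classical
  rw [← hS.coe_toFinset, Set.ncard_coe_finset, card_eq_sum_card_fiberwise (f := Prod.fst)
    (t := range R) fun p hp => by simpa using hR p (by simpa using hp)]
  refine sum_congr rfl fun i _ => ?_
  rw [← Set.ncard_coe_finset, ← Set.ncard_preimage_of_injective_subset_range
    (Prod.mk_right_injective i) fun p hp =>
      ⟨p.2, by
        obtain ⟨-, rfl⟩ : p ∈ S ∧ p.1 = i := by simpa using hp
        rfl⟩]
  congr 1
  ext j
  simp

section SkewCells

variable {l m : LRPartition}

lemma fst_lt_of_mem_skewCells {B : ℕ} (hl : ∀ i, B ≤ i → l.parts i = 0) {p : ℕ × ℕ}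
    (hp : p ∈ skewCells l m) : p.1 < B := by
  by_contra! h
  have := hp.2
  rw [hl _ h] at this
  omega

lemma skewCells_finite (l m : LRPartition) : (skewCells l m).Finite := by
  obtain ⟨B, hB⟩ := l.eventually_zero
  refine ((Set.finite_Iio B).prod (Set.finite_Iio (l.parts 0))).subset fun p hp => ?_
  exact ⟨fst_lt_of_mem_skewCells hB hp, hp.2.trans_le (l.antitone' (Nat.zero_le _))⟩

lemma finite_row (i : ℕ) (P : ℕ → Prop) : {j | (i, j) ∈ skewCells l m ∧ P j}.Finite :=
  (Set.finite_Ico (m.parts i) (l.parts i)).subset fun _ hj => hj.1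

end SkewCells

noncomputable def rowContent (l m : LRPartition) (T : ℕ × ℕ → ℕ) (i k : ℕ) : ℕ :=
  {j | (i, j) ∈ skewCells l m ∧ T (i, j) = k + 1}.ncard

section RowContent

variable {l m : LRPartition} (T : ℕ × ℕ → ℕ)

lemma ncard_eq_sum_rowContent {B : ℕ} (hl : ∀ i, B ≤ i → l.parts i = 0) (k : ℕ) :
    {p ∈ skewCells l m | T p = k + 1}.ncard = ∑ i ∈ range B, rowContent l m T i k :=
  ncard_eq_sum_ncard_rows ((skewCells_finite l m).subset fun _ hp => hp.1)
    fun _ hp => fst_lt_of_mem_skewCells hl hp.1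

lemma ncard_readPrefix (r c k : ℕ) :
    {p ∈ skewCells l m | (p.1 < r ∨ (p.1 = r ∧ c ≤ p.2)) ∧ T p = k + 1}.ncard =
      ∑ i ∈ range r, rowContent l m T i k +
        {j | (r, j) ∈ skewCells l m ∧ c ≤ j ∧ T (r, j) = k + 1}.ncard := by
  rw [ncard_eq_sum_ncard_rows ((skewCells_finite l m).subset fun _ hp => hp.1)
    (R := r + 1) fun p hp => by rcases hp.2.1 with h | h <;> omega, sum_range_succ]
  congr 1
  · refine sum_congr rfl fun i hi => ?_
    have hi : i < r := mem_range.1 hi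
    simp only [rowContent, Set.mem_sep_iff]
    congr 1
    ext j
    simp [hi]
  · congr 1
    ext j
    simp only [Set.mem_ofPred_eq, lt_irrefl, true_and, false_or]

lemma ncard_row_ge_le_rowContent (r c k : ℕ) :
    {j | (r, j) ∈ skewCells l m ∧ c ≤ j ∧ T (r, j) = k + 1}.ncard ≤ rowContent l m T r k :=
  Set.ncard_le_ncard (fun _ hj => ⟨hj.1, hj.2.2⟩) (finite_row r _)

end RowContent

/-- The first column of row `i` holding an entry `> t`, when row `i` holds `M i k` entries
`k + 1` for each `k`. -/
def rowBoundary (m : LRPartition) (M : ℕ → ℕ → ℕ) (i t : ℕ) : ℕ :=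
  m.parts i + ∑ k ∈ range t, M i k

section RowBoundary

variable {m : LRPartition} {M : ℕ → ℕ → ℕ} {i t : ℕ}

lemma le_rowBoundary : m.parts i ≤ rowBoundary m M i t :=
  Nat.le_add_right _ _

@[simp] lemma rowBoundary_zero : rowBoundary m M i 0 = m.parts i := by
  simp [rowBoundary]

lemma rowBoundary_succ : rowBoundary m M i (t + 1) = rowBoundary m M i t + M i t := by
  simp [rowBoundary, sum_range_succ, Nat.add_assoc]

lemma rowBoundary_mono {t' : ℕ} (h : t ≤ t') : rowBoundary m M i t ≤ rowBoundary m M i t' :=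
  Nat.add_le_add_left (sum_le_sum_of_subset (range_subset_range.2 h)) _

lemma rowBoundary_add (m' : LRPartition) (M' : ℕ → ℕ → ℕ) :
    rowBoundary (m + m') (M + M') i t = rowBoundary m M i t + rowBoundary m' M' i t := by
  simp only [rowBoundary, LRPartition.add_parts, Pi.add_apply, sum_add_distrib]
  omega

end RowBoundary

/-- The linear conditions satisfied by the row-content matrix `M` of an LR tableau of shape
`l/m` and content `nu` whose rows and entries are all below `B`; `rowBoundary_succ_le` is column
strictness. -/
structure IsLRMatrix (l m nu : LRPartition) (B : ℕ) (M : ℕ → ℕ → ℕ) : Prop where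
  parts_eq_zero : ∀ i, B ≤ i → l.parts i = 0
  eq_zero : ∀ i k, B ≤ k → M i k = 0
  rowBoundary_eq : ∀ i, rowBoundary m M i B = l.parts i
  rowBoundary_succ_le : ∀ i t, rowBoundary m M (i + 1) (t + 1) ≤ rowBoundary m M i t
  sum_col : ∀ k, ∑ i ∈ range B, M i k = nu.parts k
  lattice : ∀ r k, ∑ i ∈ range (r + 1), M i (k + 1) ≤ ∑ i ∈ range r, M i k

namespace IsLRMatrix

variable {l m nu : LRPartition} {B : ℕ} {M : ℕ → ℕ → ℕ} {i t : ℕ}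

lemma rowBoundary_of_le (hM : IsLRMatrix l m nu B M) (h : B ≤ t) :
    rowBoundary m M i t = l.parts i := by
  rw [← hM.rowBoundary_eq i, rowBoundary, rowBoundary,
    sum_subset (range_subset_range.2 h) fun k _ hk => hM.eq_zero i k (by simpa using hk)]

lemma rowBoundary_le (hM : IsLRMatrix l m nu B M) : rowBoundary m M i t ≤ l.parts i :=
  (rowBoundary_mono (le_max_left t B)).trans (hM.rowBoundary_of_le (le_max_right t B)).le

lemma rowBoundary_le_of_lt (hM : IsLRMatrix l m nu B M) {i' : ℕ} (h : i < i') :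
    rowBoundary m M i' (t + 1) ≤ rowBoundary m M i t := by
  induction i', h using Nat.le_induction with
  | base => exact hM.rowBoundary_succ_le i t
  | succ i' _ ih =>
    exact (hM.rowBoundary_succ_le i' t).trans ((rowBoundary_mono t.le_succ).trans ih)

lemma add {l' m' nu' : LRPartition} {M' : ℕ → ℕ → ℕ} (hM : IsLRMatrix l m nu B M)
    (hM' : IsLRMatrix l' m' nu' B M') :
    IsLRMatrix (l + l') (m + m') (nu + nu') B (M + M') where
  parts_eq_zero i hi := by simp [hM.parts_eq_zero i hi, hM'.parts_eq_zero i hi]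
  eq_zero i k hk := by simp [hM.eq_zero i k hk, hM'.eq_zero i k hk]
  rowBoundary_eq i := by simp [rowBoundary_add, hM.rowBoundary_eq, hM'.rowBoundary_eq]
  rowBoundary_succ_le i t := by
    simp only [rowBoundary_add]
    exact Nat.add_le_add (hM.rowBoundary_succ_le i t) (hM'.rowBoundary_succ_le i t)
  sum_col k := by simp [sum_add_distrib, hM.sum_col, hM'.sum_col]
  lattice r k := by
    simp only [Pi.add_apply, sum_add_distrib]
    exact Nat.add_le_add (hM.lattice r k) (hM'.lattice r k)

end IsLRMatrix

open scoped Classical in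
/-- The filling of `l/m` whose row `i` holds `M i k` entries `k + 1`, in increasing order. -/
noncomputable def ofMatrix (l m : LRPartition) (M : ℕ → ℕ → ℕ) (p : ℕ × ℕ) : ℕ :=
  if h : p ∈ skewCells l m ∧ ∃ t, p.2 < rowBoundary m M p.1 (t + 1) then Nat.find h.2 + 1
  else 0

section OfMatrix

variable {l m nu : LRPartition} {B : ℕ} {M : ℕ → ℕ → ℕ}

lemma ofMatrix_of_not_mem {p : ℕ × ℕ} (hp : p ∉ skewCells l m) : ofMatrix l m M p = 0 :=
  dif_neg fun h => hp h.1

lemma ofMatrix_le_iff (hM : IsLRMatrix l m nu B M) {i j t : ℕ} (hp : (i, j) ∈ skewCells l m) :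
    ofMatrix l m M (i, j) ≤ t ↔ j < rowBoundary m M i t := by
  classical
  have hex : ∃ s, j < rowBoundary m M i (s + 1) :=
    ⟨B, hp.2.trans_eq (hM.rowBoundary_of_le B.le_succ).symm⟩
  rw [ofMatrix, dif_pos ⟨hp, hex⟩, Nat.add_one_le_iff, Nat.find_lt_iff]
  constructor
  · rintro ⟨s, hs, hj⟩
    exact hj.trans_le (rowBoundary_mono hs)
  · intro hj
    cases t with
    | zero => exact absurd hj (by simpa using hp.1)
    | succ s => exact ⟨s, s.lt_succ_self, hj⟩

lemma ofMatrix_pos (hM : IsLRMatrix l m nu B M) {i j : ℕ} (hp : (i, j) ∈ skewCells l m) :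
    0 < ofMatrix l m M (i, j) := by
  rw [Nat.pos_iff_ne_zero, Ne, ← Nat.le_zero, ofMatrix_le_iff hM hp, rowBoundary_zero, not_lt]
  exact hp.1

lemma rowContent_ofMatrix (hM : IsLRMatrix l m nu B M) : rowContent l m (ofMatrix l m M) = M := by
  funext i k
  have hrow : {j | (i, j) ∈ skewCells l m ∧ ofMatrix l m M (i, j) = k + 1} =
      Set.Ico (rowBoundary m M i k) (rowBoundary m M i (k + 1)) := by
    ext j
    constructor
    · rintro ⟨hp, hj⟩
      refine ⟨not_lt.1 fun h => ?_, (ofMatrix_le_iff hM hp).1 hj.le⟩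
      have := (ofMatrix_le_iff hM hp).2 h
      omega
    · rintro ⟨hj₁, hj₂⟩
      have hp : (i, j) ∈ skewCells l m := ⟨le_rowBoundary.trans hj₁, hj₂.trans_le hM.rowBoundary_le⟩
      refine ⟨hp, le_antisymm ((ofMatrix_le_iff hM hp).2 hj₂) (not_lt.1 fun h => ?_)⟩
      exact (not_lt.2 hj₁) ((ofMatrix_le_iff hM hp).1 (Nat.le_of_lt_succ h))
  rw [rowContent, hrow, Set.ncard_Ico_nat, rowBoundary_succ]
  omega

lemma isLRTableau_ofMatrix (hM : IsLRMatrix l m nu B M) : IsLRTableau l m nu (ofMatrix l m M) where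
  sub _ := le_rowBoundary.trans (hM.rowBoundary_le (t := 0))
  pos _ hp := ofMatrix_pos hM hp
  zero _ hp := ofMatrix_of_not_mem hp
  row_weak _ _ _ hp hp' hjj :=
    (ofMatrix_le_iff hM hp).2 (hjj.trans_lt ((ofMatrix_le_iff hM hp').1 le_rfl))
  col_strict i i' j hp hp' hii := by
    obtain ⟨s, hs⟩ := Nat.exists_eq_add_one.2 (ofMatrix_pos hM hp')
    have hj := ((ofMatrix_le_iff hM hp').1 hs.le).trans_le (hM.rowBoundary_le_of_lt hii)
    have := (ofMatrix_le_iff hM hp).2 hj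
    omega
  content k := by
    rw [ncard_eq_sum_rowContent _ hM.parts_eq_zero, rowContent_ofMatrix hM, hM.sum_col]
  lattice r c k hk := by
    obtain ⟨k, rfl⟩ := Nat.exists_eq_add_one.2 hk
    rw [ncard_readPrefix, ncard_readPrefix]
    have hrow := ncard_row_ge_le_rowContent (l := l) (m := m) (ofMatrix l m M) r c (k + 1)
    have hlat := hM.lattice r k
    rw [rowContent_ofMatrix hM] at hrow ⊢
    rw [sum_range_succ] at hlat
    omega

end OfMatrix

end LittlewoodRichardson

open LittlewoodRichardson Finset Filter

namespace IsLRTableau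

variable {l m nu : LRPartition} {T : ℕ × ℕ → ℕ} {i t : ℕ}

lemma le_of_mem_skewCells (hT : IsLRTableau l m nu T) {B : ℕ} (hnu : ∀ k, B ≤ k → nu.parts k = 0)
    {p : ℕ × ℕ} (hp : p ∈ skewCells l m) : T p ≤ B := by
  by_contra! h
  have hpos : 0 < {q ∈ skewCells l m | T q = T p - 1 + 1}.ncard :=
    (Set.ncard_pos ((skewCells_finite l m).subset fun _ hq => hq.1)).2
      ⟨p, hp, by have := hT.pos p hp; omega⟩
  rw [hT.content, hnu _ (by omega)] at hpos
  exact hpos.false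

lemma rowContent_le (hT : IsLRTableau l m nu T) (k : ℕ) : rowContent l m T i k ≤ nu.parts k := by
  rw [← hT.content k]
  exact Set.ncard_le_ncard_of_injOn (Prod.mk i) (fun _ hj => hj)
    (Prod.mk_right_injective i).injOn ((skewCells_finite l m).subset fun _ hq => hq.1)

lemma rowBoundary_rowContent (hT : IsLRTableau l m nu T) (i t : ℕ) :
    rowBoundary m (rowContent l m T) i t =
      m.parts i + {j | (i, j) ∈ skewCells l m ∧ T (i, j) ≤ t}.ncard := by
  induction t with
  | zero =>
    rw [rowBoundary_zero, Nat.left_eq_add, Set.ncard_eq_zero (finite_row i _)]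
    ext j
    simpa using fun hp => (hT.pos _ hp).ne'
  | succ t ih =>
    have hsplit : {j | (i, j) ∈ skewCells l m ∧ T (i, j) ≤ t + 1} =
        {j | (i, j) ∈ skewCells l m ∧ T (i, j) ≤ t} ∪
          {j | (i, j) ∈ skewCells l m ∧ T (i, j) = t + 1} := by
      ext j
      simp only [Set.mem_union, Set.mem_ofPred_eq]
      rw [← and_or_left, Nat.le_add_one_iff]
    rw [rowBoundary_succ, ih, hsplit, Set.ncard_union_eq _ (finite_row i _) (finite_row i _),
      rowContent, Nat.add_assoc]
    exact Set.disjoint_left.2 fun j hj hj' => by have := hj.2; have := hj'.2; omega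

lemma le_iff_lt_rowBoundary (hT : IsLRTableau l m nu T) {j : ℕ} (hp : (i, j) ∈ skewCells l m) :
    T (i, j) ≤ t ↔ j < rowBoundary m (rowContent l m T) i t := by
  have hmj : m.parts i ≤ j := hp.1
  rw [hT.rowBoundary_rowContent]
  constructor
  · intro hj
    have hsub : Set.Ico (m.parts i) (j + 1) ⊆ {j | (i, j) ∈ skewCells l m ∧ T (i, j) ≤ t} :=
      fun j' hj' =>
        have hp' : (i, j') ∈ skewCells l m := ⟨hj'.1, (Nat.lt_succ_iff.1 hj'.2).trans_lt hp.2⟩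
        ⟨hp', (hT.row_weak i j' j hp' hp (Nat.lt_succ_iff.1 hj'.2)).trans hj⟩
    have := Set.ncard_le_ncard hsub (finite_row i _)
    rw [Set.ncard_Ico_nat] at this
    omega
  · intro hj
    by_contra! ht
    have hsub : {j | (i, j) ∈ skewCells l m ∧ T (i, j) ≤ t} ⊆ Set.Ico (m.parts i) j :=
      fun j' ⟨hp', hj'⟩ => ⟨hp'.1, not_le.1 fun h => not_lt.2 (hT.row_weak i j j' hp hp' h)
        (hj'.trans_lt ht)⟩
    have := Set.ncard_le_ncard hsub (Set.finite_Ico _ _)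
    rw [Set.ncard_Ico_nat] at this
    omega

lemma rowBoundary_le (hT : IsLRTableau l m nu T) :
    rowBoundary m (rowContent l m T) i t ≤ l.parts i := by
  have := Set.ncard_le_ncard (s := {j | (i, j) ∈ skewCells l m ∧ T (i, j) ≤ t})
    (t := Set.Ico (m.parts i) (l.parts i)) (fun _ hj => hj.1)
  rw [Set.ncard_Ico_nat] at this
  rw [hT.rowBoundary_rowContent]
  have := hT.sub i
  omega

lemma isLRMatrix (hT : IsLRTableau l m nu T) {B : ℕ} (hl : ∀ i, B ≤ i → l.parts i = 0)
    (hnu : ∀ k, B ≤ k → nu.parts k = 0) : IsLRMatrix l m nu B (rowContent l m T) where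
  parts_eq_zero := hl
  eq_zero i k hk := Nat.eq_zero_of_le_zero ((hT.rowContent_le k).trans (hnu k hk).le)
  rowBoundary_eq i := by
    refine hT.rowBoundary_le.antisymm (not_lt.1 fun h => ?_)
    have hp : (i, rowBoundary m (rowContent l m T) i B) ∈ skewCells l m := ⟨le_rowBoundary, h⟩
    exact (lt_irrefl _) ((hT.le_iff_lt_rowBoundary hp).1 (hT.le_of_mem_skewCells hnu hp))
  rowBoundary_succ_le i t := by
    by_contra! h
    set j := rowBoundary m (rowContent l m T) i t
    have hp' : (i + 1, j) ∈ skewCells l m :=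
      ⟨(m.antitone' i.le_succ).trans le_rowBoundary, h.trans_le hT.rowBoundary_le⟩
    have hp : (i, j) ∈ skewCells l m :=
      ⟨le_rowBoundary, hp'.2.trans_le (l.antitone' i.le_succ)⟩
    have h₁ := (hT.le_iff_lt_rowBoundary hp').2 h
    have h₂ := (hT.le_iff_lt_rowBoundary hp (t := t)).not.2 (lt_irrefl j)
    have := hT.col_strict i (i + 1) j hp hp' i.lt_succ_self
    omega
  sum_col k := by rw [← ncard_eq_sum_rowContent T hl, hT.content]
  lattice r k := by
    set c := rowBoundary m (rowContent l m T) r (k + 1)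
    have hlat := hT.lattice r c (k + 1) k.succ_pos
    rw [ncard_readPrefix, ncard_readPrefix] at hlat
    -- with the cut at `c`, row `r` contributes all its entries `k + 2` and none equal to `k + 1`
    have hge_iff : ∀ j, (r, j) ∈ skewCells l m → (c ≤ j ↔ k + 1 < T (r, j)) := fun j hp => by
      rw [iff_comm, ← not_le, hT.le_iff_lt_rowBoundary hp, not_lt]
    have hrow : {j | (r, j) ∈ skewCells l m ∧ c ≤ j ∧ T (r, j) = k + 1 + 1} =
        {j | (r, j) ∈ skewCells l m ∧ T (r, j) = k + 1 + 1} := by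
      ext j
      simp only [Set.mem_ofPred_eq]
      exact ⟨fun h => ⟨h.1, h.2.2⟩, fun h => ⟨h.1, (hge_iff j h.1).2 (by omega), h.2⟩⟩
    have hempty : {j | (r, j) ∈ skewCells l m ∧ c ≤ j ∧ T (r, j) = k + 1} = ∅ :=
      Set.eq_empty_of_forall_notMem fun j h => by
        have := (hge_iff j h.1).1 h.2.1
        have := h.2.2
        omega
    rw [hrow, hempty, Set.ncard_empty] at hlat
    rw [sum_range_succ]
    exact hlat

lemma ofMatrix_rowContent (hT : IsLRTableau l m nu T) {B : ℕ} (hl : ∀ i, B ≤ i → l.parts i = 0)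
    (hnu : ∀ k, B ≤ k → nu.parts k = 0) : ofMatrix l m (rowContent l m T) = T := by
  have hM := hT.isLRMatrix hl hnu
  funext ⟨i, j⟩
  by_cases hp : (i, j) ∈ skewCells l m
  · exact le_antisymm ((ofMatrix_le_iff hM hp).2 ((hT.le_iff_lt_rowBoundary hp).1 le_rfl))
      ((hT.le_iff_lt_rowBoundary hp).2 ((ofMatrix_le_iff hM hp).1 le_rfl))
  · rw [ofMatrix_of_not_mem hp, hT.zero _ hp]

end IsLRTableau

lemma setOf_isLRTableau_finite (l m nu : LRPartition) : {T | IsLRTableau l m nu T}.Finite := by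
  obtain ⟨B, hB⟩ := nu.eventually_zero
  have := (skewCells_finite l m).to_subtype
  refine Set.Finite.of_finite_image (f := (skewCells l m).domRestrict) ?_ ?_
  · refine (Set.Finite.pi (t := fun _ => Set.Iic B) fun _ => Set.finite_Iic B).subset ?_
    rintro _ ⟨T, hT, rfl⟩ p -
    exact hT.le_of_mem_skewCells hB p.2
  · intro T hT U hU hTU
    funext p
    by_cases hp : p ∈ skewCells l m
    · exact congrFun hTU ⟨p, hp⟩
    · rw [hT.zero p hp, hU.zero p hp]

theorem LRcoeff_le_LRcoeff_add {l m nu l' m' nu' : LRPartition} {T' : ℕ × ℕ → ℕ}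
    (hT' : IsLRTableau l' m' nu' T') :
    LRcoeff l m nu ≤ LRcoeff (l + l') (m + m') (nu + nu') := by
  have hzero (a : LRPartition) : ∀ᶠ i in atTop, a.parts i = 0 :=
    eventually_atTop.2 a.eventually_zero
  obtain ⟨B, hB⟩ := eventually_atTop.1 (((hzero l).and (hzero nu)).and ((hzero l').and (hzero nu')))
  have hl (i) (hi : B ≤ i) := (hB i hi).1.1
  have hnu (k) (hk : B ≤ k) := (hB k hk).1.2
  have hM' := hT'.isLRMatrix (fun i hi => (hB i hi).2.1) (fun k hk => (hB k hk).2.2)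
  refine Set.ncard_le_ncard_of_injOn
    (fun T => ofMatrix (l + l') (m + m') (rowContent l m T + rowContent l' m' T'))
    (fun T hT => isLRTableau_ofMatrix ((hT.isLRMatrix hl hnu).add hM')) ?_
    (setOf_isLRTableau_finite _ _ _)
  intro T hT U hU hTU
  have hcontent := congrArg (rowContent (l + l') (m + m')) hTU
  simp only [rowContent_ofMatrix ((hT.isLRMatrix hl hnu).add hM'),
    rowContent_ofMatrix ((hU.isLRMatrix hl hnu).add hM')] at hcontent
  rw [← hT.ofMatrix_rowContent hl hnu, ← hU.ofMatrix_rowContent hl hnu, add_right_cancel hcontent]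

/-- If `c(λ';μ',ν') ≠ 0`, then for every `n ≥ 0`,
`c(nλ+λ'; nμ+μ', nν+ν') ≥ c(nλ; nμ, nν)`. -/
theorem lr_stretch_add_ge (l m nu l' m' nu' : LRPartition)
    (h : LRcoeff l' m' nu' ≠ 0) (n : ℕ) :
    LRcoeff (n • l) (n • m) (n • nu) ≤
      LRcoeff (n • l + l') (n • m + m') (n • nu + nu') := by
  obtain ⟨T', hT'⟩ := Set.nonempty_of_ncard_ne_zero h
  exact LRcoeff_le_LRcoeff_add hT'
end

section
/- Let μ ⊆ λ and μ' ⊆ λ' be partitions. Then Σ_{ν'} c(λ+λ'; μ+μ', ν') ≥ Σ_ν c(λ;μ,ν), where both sums range over all partitions (only finitely many summands are nonzero). -/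
/-!
An LR tableau `T` of shape `λ/μ` is determined by its row profile `F i v`, the number of
entries `≤ v` in row `i`: as rows weakly increase, these entries fill the first `F i v` cells
of the row. Column strictness and the lattice condition (together with the bound
`T (i, c) ≤ i + 1` that the latter forces) become linear inequalities in `F`. Hence adding to
the profile of an LR tableau of `λ/μ` the profile of the LR filling of `λ'/μ'` that numbers
every column `1, 2, …` from the top gives the profile of an LR tableau of `(λ+λ')/(μ+μ')`.
This map is injective, and `Σ_ν c(λ;μ,ν)` is the number of all LR tableaux of shape `λ/μ`.
-/

open Finset Function

theorem finsum_ncard_eq_ncard_iUnion {α β : Type*} {s : β → Set α}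
    (hs : Pairwise (Disjoint on s)) (hfin : (⋃ b, s b).Finite) :
    ∑ᶠ b, (s b).ncard = (⋃ b, s b).ncard := by
  have ht : {b | (s b).Nonempty}.Finite := by
    refine Set.Finite.of_finite_image (f := s)
      (hfin.finite_subsets.subset ?_) fun b hb b' _ hbb' => ?_
    · rintro _ ⟨b, -, rfl⟩
      exact Set.subset_iUnion s b
    · by_contra hne
      obtain ⟨a, ha⟩ := hb
      exact Set.disjoint_left.1 (hs hne) ha (hbb' ▸ ha)
  lift {b | (s b).Nonempty} to Finset β using ht with t ht_eq
  have hmem : ∀ b, b ∈ t ↔ (s b).Nonempty := fun b => by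
    rw [← Finset.mem_coe, ht_eq, Set.mem_ofPred_eq]
  have hunion : (⋃ b, s b) = ⋃ b ∈ (t : Set β), s b := by
    ext a
    simp only [Set.mem_iUnion, Finset.mem_coe, hmem, exists_prop]
    exact ⟨fun ⟨b, ha⟩ => ⟨b, ⟨a, ha⟩, ha⟩, fun ⟨b, _, ha⟩ => ⟨b, ha⟩⟩
  rw [finsum_eq_sum_of_support_subset _ fun b hb => (hmem b).2 (Set.nonempty_of_ncard_ne_zero hb),
    hunion, t.finite_toSet.ncard_biUnion (fun b _ => hfin.subset (Set.subset_iUnion s b))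
      fun b _ b' _ hbb' => hs hbb', finsum_mem_coe_finset]

theorem Set.finite_setOf_support_subset_forall_le {α : Type*} {s : Set α} (hs : s.Finite)
    (B : ℕ) : {f : α → ℕ | support f ⊆ s ∧ ∀ a, f a ≤ B}.Finite := by
  have := hs.to_subtype
  refine Set.Finite.of_finite_image (f := fun f (a : s) => f a)
    ((Set.Finite.pi' fun _ => Set.finite_Iic B).subset ?_) fun f hf g hg hfg => ?_
  · rintro _ ⟨f, ⟨-, hf⟩, rfl⟩ a
    exact hf a
  · funext a
    by_cases ha : a ∈ s
    · exact congrFun hfg ⟨a, ha⟩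
    · rw [notMem_support.1 fun h => ha (hf.1 h), notMem_support.1 fun h => ha (hg.1 h)]

theorem LRPartition.parts_injective : Injective LRPartition.parts := by
  rintro ⟨_, _, _⟩ ⟨_, _, _⟩ rfl
  rfl

section RowProfile

variable {l m : LRPartition}

theorem mem_skewCells {i c : ℕ} : (i, c) ∈ skewCells l m ↔ m.parts i ≤ c ∧ c < l.parts i :=
  Iff.rfl

theorem lt_of_mem_skewCells {N : ℕ} (hN : ∀ i, N ≤ i → l.parts i = 0) {p : ℕ × ℕ}
    (hp : p ∈ skewCells l m) : p.1 < N := by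
  by_contra! hi
  exact Nat.not_lt_zero _ (hN p.1 hi ▸ hp.2)

theorem finite_skewCells (l m : LRPartition) : (skewCells l m).Finite := by
  obtain ⟨N, hN⟩ := l.eventually_zero
  exact ((Set.finite_lt_nat N).prod (Set.finite_lt_nat (l.parts 0))).subset fun p hp =>
    ⟨lt_of_mem_skewCells hN hp, hp.2.trans_le (l.antitone' (Nat.zero_le _))⟩

theorem mem_skewCells_of_le {i i' i'' j : ℕ} (h : (i, j) ∈ skewCells l m)
    (h'' : (i'', j) ∈ skewCells l m) (hi : i ≤ i') (hi' : i' ≤ i'') :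
    (i', j) ∈ skewCells l m :=
  ⟨(m.antitone' hi).trans h.1, h''.2.trans_le (l.antitone' hi')⟩

def rowCells (l m : LRPartition) (i : ℕ) : Finset ℕ := Ico (m.parts i) (l.parts i)

theorem mem_rowCells {i c : ℕ} : c ∈ rowCells l m i ↔ (i, c) ∈ skewCells l m := Finset.mem_Ico

def rowProfile (l m : LRPartition) (T : ℕ × ℕ → ℕ) (i v : ℕ) : ℕ :=
  #{c ∈ rowCells l m i | T (i, c) ≤ v}

theorem rowProfile_mono (T : ℕ × ℕ → ℕ) (i : ℕ) : Monotone (rowProfile l m T i) :=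
  fun _ _ hvw => card_le_card fun _ hc => by
    rw [mem_filter] at hc ⊢
    exact ⟨hc.1, hc.2.trans hvw⟩

theorem rowProfile_le (T : ℕ × ℕ → ℕ) (i v : ℕ) :
    rowProfile l m T i v ≤ l.parts i - m.parts i :=
  (card_filter_le _ _).trans (Nat.card_Ico _ _).le

theorem card_rowCells_filter_eq_succ (T : ℕ × ℕ → ℕ) (i k : ℕ) :
    #{c ∈ rowCells l m i | T (i, c) = k + 1} =
      rowProfile l m T i (k + 1) - rowProfile l m T i k := by
  have hsplit : {c ∈ rowCells l m i | T (i, c) ≤ k + 1} =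
      {c ∈ rowCells l m i | T (i, c) ≤ k} ∪ {c ∈ rowCells l m i | T (i, c) = k + 1} := by
    rw [← filter_or]
    exact filter_congr fun _ _ => by omega
  rw [rowProfile, rowProfile, hsplit,
    card_union_of_disjoint (disjoint_filter.2 fun _ _ _ => by omega)]
  omega

theorem ncard_skewCells_row_lt_eq_sum (T : ℕ × ℕ → ℕ) (R k : ℕ) :
    {p ∈ skewCells l m | p.1 < R ∧ T p = k + 1}.ncard =
      ∑ i ∈ range R, (rowProfile l m T i (k + 1) - rowProfile l m T i k) := by
  have hset : {p ∈ skewCells l m | p.1 < R ∧ T p = k + 1} = ↑((range R).biUnion fun i =>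
      {c ∈ rowCells l m i | T (i, c) = k + 1}.map ⟨Prod.mk i, Prod.mk_right_injective i⟩) := by
    ext ⟨i, c⟩
    simp only [Set.mem_ofPred_eq, coe_biUnion, coe_range, Set.mem_iUnion, Set.mem_Iio, coe_map,
      coe_filter, Embedding.coeFn_mk, Set.mem_image, Prod.mk.injEq, mem_rowCells]
    constructor
    · rintro ⟨hc, hi, hT⟩
      exact ⟨i, hi, c, ⟨hc, hT⟩, rfl, rfl⟩
    · rintro ⟨i, hi, c, ⟨hc, hT⟩, rfl, rfl⟩
      exact ⟨hc, hi, hT⟩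
  rw [hset, Set.ncard_coe_finset, card_biUnion fun i _ i' _ hii' => disjoint_left.2 ?_]
  · exact sum_congr rfl fun i _ => by rw [card_map, card_rowCells_filter_eq_succ]
  · simp only [mem_map, Embedding.coeFn_mk]
    rintro _ ⟨c, -, rfl⟩ ⟨c', -, h⟩
    exact hii' (Prod.mk.inj h).1.symm

theorem ncard_skewCells_eq_sum {N : ℕ} (hN : ∀ i, N ≤ i → l.parts i = 0) (T : ℕ × ℕ → ℕ)
    (k : ℕ) : {p ∈ skewCells l m | T p = k + 1}.ncard =
      ∑ i ∈ range N, (rowProfile l m T i (k + 1) - rowProfile l m T i k) := by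
  rw [← ncard_skewCells_row_lt_eq_sum]
  congr 1
  ext p
  exact ⟨fun ⟨hp, hv⟩ => ⟨hp, lt_of_mem_skewCells hN hp, hv⟩, fun ⟨hp, _, hv⟩ => ⟨hp, hv⟩⟩

end RowProfile

section Profile

variable {l m l' m' : LRPartition} {F G : ℕ → ℕ → ℕ}

/-- Reading `F i (k + 1) - F i k` as the number of entries `k + 1` in row `i`: rows `≤ r`
contain at most as many entries `k + 2` as rows `< r` contain entries `k + 1`. -/
def IsLatticeProfile (F : ℕ → ℕ → ℕ) : Prop :=
  ∀ r k, ∑ i ∈ range (r + 1), (F i (k + 2) - F i (k + 1)) ≤ ∑ i ∈ range r, (F i (k + 1) - F i k)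

theorem IsLatticeProfile.apply_succ_le (hF : IsLatticeProfile F) {i k : ℕ} (hik : i < k) :
    F i (k + 1) ≤ F i k := by
  have hvanish : ∀ r k, r ≤ k → ∑ i ∈ range r, (F i (k + 1) - F i k) = 0 := by
    intro r
    induction r with
    | zero => simp
    | succ r ih =>
      rintro (_ | k) hk
      · omega
      · exact Nat.eq_zero_of_le_zero ((hF r k).trans (ih k (by omega)).le)
  have := sum_eq_zero_iff.1 (hvanish (i + 1) k hik) i (mem_range.2 i.lt_succ_self)
  omega

theorem IsLatticeProfile.add (hF : IsLatticeProfile F) (hG : IsLatticeProfile G)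
    (hFm : ∀ i, Monotone (F i)) (hGm : ∀ i, Monotone (G i)) : IsLatticeProfile (F + G) := by
  have hsum : ∀ (s : Finset ℕ) k, ∑ i ∈ s, ((F + G) i (k + 1) - (F + G) i k) =
      ∑ i ∈ s, (F i (k + 1) - F i k) + ∑ i ∈ s, (G i (k + 1) - G i k) := fun s k => by
    rw [← sum_add_distrib]
    refine sum_congr rfl fun i _ => ?_
    have := hFm i (Nat.le_add_right k 1)
    have := hGm i (Nat.le_add_right k 1)
    simp only [Pi.add_apply]
    omega
  intro r k
  rw [hsum, hsum]
  exact add_le_add (hF r k) (hG r k)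

/-- The conditions characterising the row profiles of LR tableaux of shape `l/m`. -/
structure IsLRProfile (l m : LRPartition) (F : ℕ → ℕ → ℕ) : Prop where
  sub : LRPartition.Sub m l
  zero : ∀ i, F i 0 = 0
  mono : ∀ i, Monotone (F i)
  top : ∀ i v, i + 1 ≤ v → F i v = l.parts i - m.parts i
  col : ∀ i v, m.parts (i + 1) + F (i + 1) (v + 1) ≤ m.parts i + F i v
  lattice : IsLatticeProfile F

theorem IsLRProfile.apply_le (hF : IsLRProfile l m F) (i v : ℕ) : F i v ≤ l.parts i - m.parts i :=
  hF.top i (max v (i + 1)) (le_max_right _ _) ▸ hF.mono i (le_max_left _ _)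

theorem IsLRProfile.add (hF : IsLRProfile l m F) (hG : IsLRProfile l' m' G) :
    IsLRProfile (l + l') (m + m') (F + G) where
  sub i := add_le_add (hF.sub i) (hG.sub i)
  zero i := by simp [hF.zero, hG.zero]
  mono i := (hF.mono i).add (hG.mono i)
  top i v hv := by
    have := hF.sub i
    have := hG.sub i
    simp only [Pi.add_apply, LRPartition.add_parts, hF.top i v hv, hG.top i v hv]
    omega
  col i v := by
    have := hF.col i v
    have := hG.col i v
    simp only [Pi.add_apply, LRPartition.add_parts]
    omega
  lattice := hF.lattice.add hG.lattice hF.mono hG.mono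

/-- The row profile of the filling numbering the cells of each column `1, 2, …` from the top:
its entry in cell `(i, c)` is `≤ v` iff `i < v` or `c < m.parts (i - v)`. -/
def canonicalProfile (l m : LRPartition) (i v : ℕ) : ℕ :=
  (if v ≤ i then min (l.parts i) (m.parts (i - v)) else l.parts i) - m.parts i

theorem isLRProfile_canonicalProfile (h : LRPartition.Sub m l) :
    IsLRProfile l m (canonicalProfile l m) where
  sub := h
  zero i := by simp [canonicalProfile, h i]
  mono i v w hvw := by
    have := m.antitone' (show i - w ≤ i - v by omega)
    simp only [canonicalProfile]
    split_ifs <;> omega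
  top i v hv := by simp [canonicalProfile, show ¬v ≤ i by omega]
  col i v := by
    have := m.antitone' (Nat.le_add_right i 1)
    have := l.antitone' (Nat.le_add_right i 1)
    simp only [canonicalProfile, Nat.add_sub_add_right]
    split_ifs <;> omega
  lattice r k := by
    rw [sum_range_succ', show canonicalProfile l m 0 (k + 2) - canonicalProfile l m 0 (k + 1) = 0
      by simp [canonicalProfile], add_zero]
    refine sum_le_sum fun i _ => ?_
    have := m.antitone' (show i - k ≤ i by omega)
    have := l.antitone' (Nat.le_add_right i 1)
    simp only [canonicalProfile, show i + 1 - (k + 2) = i - (k + 1) by omega,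
      Nat.add_sub_add_right]
    split_ifs <;> omega

end Profile

namespace IsLRTableau

variable {l m ν : LRPartition} {T : ℕ × ℕ → ℕ}

theorem le_iff_lt_rowProfile (hT : IsLRTableau l m ν T) {i c : ℕ}
    (hc : (i, c) ∈ skewCells l m) (v : ℕ) :
    T (i, c) ≤ v ↔ c < m.parts i + rowProfile l m T i v := by
  obtain ⟨hmc, hcl⟩ := mem_skewCells.1 hc
  constructor
  · intro hv
    have hsub : Ico (m.parts i) (c + 1) ⊆ {c' ∈ rowCells l m i | T (i, c') ≤ v} := by
      intro c' hc'
      rw [mem_Ico] at hc'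
      have hc'cell : (i, c') ∈ skewCells l m := mem_skewCells.2 ⟨hc'.1, by omega⟩
      exact mem_filter.2 ⟨mem_rowCells.2 hc'cell,
        (hT.row_weak i c' c hc'cell hc (by omega)).trans hv⟩
    have := card_le_card hsub
    rw [Nat.card_Ico] at this
    rw [rowProfile]
    omega
  · intro hlt
    by_contra! hv
    have hsub : {c' ∈ rowCells l m i | T (i, c') ≤ v} ⊆ Ico (m.parts i) c := by
      intro c' hc'
      obtain ⟨hc'cell, hc'v⟩ := mem_filter.1 hc'
      rw [mem_rowCells] at hc'cell
      refine mem_Ico.2 ⟨hc'cell.1, ?_⟩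
      by_contra! hcc'
      exact (hT.row_weak i c c' hc hc'cell hcc').not_gt (hc'v.trans_lt hv)
    have := card_le_card hsub
    rw [Nat.card_Ico] at this
    rw [rowProfile] at hlt
    omega

theorem rowProfile_zero (hT : IsLRTableau l m ν T) (i : ℕ) : rowProfile l m T i 0 = 0 :=
  card_eq_zero.2 <| filter_eq_empty_iff.2 fun _ hc => (hT.pos _ (mem_rowCells.1 hc)).not_ge

theorem rowProfile_col (hT : IsLRTableau l m ν T) (i v : ℕ) :
    m.parts (i + 1) + rowProfile l m T (i + 1) (v + 1) ≤ m.parts i + rowProfile l m T i v := by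
  have hm := m.antitone' (Nat.le_add_right i 1)
  rcases Nat.eq_zero_or_pos (rowProfile l m T (i + 1) (v + 1)) with h0 | hpos
  · omega
  set c := m.parts (i + 1) + rowProfile l m T (i + 1) (v + 1) - 1
  have hc : (i + 1, c) ∈ skewCells l m := by
    have := rowProfile_le (l := l) (m := m) T (i + 1) (v + 1)
    exact mem_skewCells.2 ⟨by omega, by omega⟩
  rcases lt_or_ge c (m.parts i) with hcm | hcm
  · omega
  have hc' : (i, c) ∈ skewCells l m := ⟨hcm, hc.2.trans_le (l.antitone' (Nat.le_add_right i 1))⟩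
  have hbelow := (hT.le_iff_lt_rowProfile hc (v + 1)).2 (by omega)
  have hstrict := hT.col_strict i (i + 1) c hc' hc (by omega)
  have := (hT.le_iff_lt_rowProfile hc' v).1 (by omega)
  omega

theorem isLatticeProfile_rowProfile (hT : IsLRTableau l m ν T) :
    IsLatticeProfile (rowProfile l m T) := by
  intro r k
  -- test the lattice condition just after the entries `k + 2` of row `r` have been read
  have hlat := hT.lattice r (m.parts r + rowProfile l m T r (k + 1)) (k + 1) k.succ_pos
  have hread : ∀ j, ∀ c, (r, c) ∈ skewCells l m → T (r, c) = j →
      (m.parts r + rowProfile l m T r (k + 1) ≤ c ↔ k + 1 < j) := fun j c hc hj => by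
    rw [← not_lt, ← hT.le_iff_lt_rowProfile hc, hj, not_le]
  have hnum : {p ∈ skewCells l m | (p.1 < r ∨ p.1 = r ∧ m.parts r + rowProfile l m T r (k + 1)
      ≤ p.2) ∧ T p = k + 1 + 1} = {p ∈ skewCells l m | p.1 < r + 1 ∧ T p = k + 1 + 1} := by
    ext ⟨i, c⟩
    simp only [Set.mem_ofPred_eq]
    constructor
    · rintro ⟨hc, hi, hTk⟩
      exact ⟨hc, by omega, hTk⟩
    · rintro ⟨hc, hi, hTk⟩
      rcases Nat.lt_succ_iff_lt_or_eq.1 hi with hi | rfl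
      · exact ⟨hc, Or.inl hi, hTk⟩
      · exact ⟨hc, Or.inr ⟨rfl, (hread _ c hc hTk).2 (by omega)⟩, hTk⟩
  have hden : {p ∈ skewCells l m | (p.1 < r ∨ p.1 = r ∧ m.parts r + rowProfile l m T r (k + 1)
      ≤ p.2) ∧ T p = k + 1} = {p ∈ skewCells l m | p.1 < r ∧ T p = k + 1} := by
    ext ⟨i, c⟩
    simp only [Set.mem_ofPred_eq]
    constructor
    · rintro ⟨hc, hi | ⟨rfl, hci⟩, hTk⟩
      · exact ⟨hc, hi, hTk⟩
      · exact absurd ((hread _ c hc hTk).1 hci) (lt_irrefl _)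
    · rintro ⟨hc, hi, hTk⟩
      exact ⟨hc, Or.inl hi, hTk⟩
  rwa [hnum, hden, ncard_skewCells_row_lt_eq_sum, ncard_skewCells_row_lt_eq_sum] at hlat

theorem le_succ_row (hT : IsLRTableau l m ν T) {i c : ℕ} (hc : (i, c) ∈ skewCells l m) :
    T (i, c) ≤ i + 1 := by
  by_contra! hlt
  obtain ⟨k, hk⟩ : ∃ k, T (i, c) = k + 1 := ⟨T (i, c) - 1, by omega⟩
  have hstable := hT.isLatticeProfile_rowProfile.apply_succ_le (show i < k by omega)
  have hempty := card_rowCells_filter_eq_succ (l := l) (m := m) T i k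
  rw [Nat.sub_eq_zero_of_le hstable, card_eq_zero, filter_eq_empty_iff] at hempty
  exact hempty (mem_rowCells.2 hc) hk

theorem isLRProfile_rowProfile (hT : IsLRTableau l m ν T) : IsLRProfile l m (rowProfile l m T) where
  sub := hT.sub
  zero := hT.rowProfile_zero
  mono := rowProfile_mono T
  top i v hv := by
    rw [rowProfile, filter_true_of_mem fun c hc => (hT.le_succ_row (mem_rowCells.1 hc)).trans hv,
      rowCells, Nat.card_Ico]
  col := hT.rowProfile_col
  lattice := hT.isLatticeProfile_rowProfile

end IsLRTableau

section FromProfile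

variable {l m : LRPartition} {T : ℕ × ℕ → ℕ}

theorem col_strict_of_succ
    (h : ∀ i j, (i, j) ∈ skewCells l m → (i + 1, j) ∈ skewCells l m → T (i, j) < T (i + 1, j))
    (i i' j : ℕ) (hc : (i, j) ∈ skewCells l m) (hc' : (i', j) ∈ skewCells l m) (hii' : i < i') :
    T (i, j) < T (i', j) := by
  induction i', hii' using Nat.le_induction with
  | base => exact h i j hc hc'
  | succ i' hii' ih =>
    have hmid := mem_skewCells_of_le hc hc' (by omega) (Nat.le_add_right i' 1)
    exact (ih hmid).trans (h i' j hmid hc')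

theorem lattice_of_isLatticeProfile (h : IsLatticeProfile (rowProfile l m T)) (r c k : ℕ)
    (hk : 0 < k) :
    {p ∈ skewCells l m | (p.1 < r ∨ (p.1 = r ∧ c ≤ p.2)) ∧ T p = k + 1}.ncard ≤
      {p ∈ skewCells l m | (p.1 < r ∨ (p.1 = r ∧ c ≤ p.2)) ∧ T p = k}.ncard := by
  obtain ⟨k, rfl⟩ : ∃ k', k = k' + 1 := ⟨k - 1, by omega⟩
  have hfin := finite_skewCells l m
  calc _ ≤ {p ∈ skewCells l m | p.1 < r + 1 ∧ T p = k + 1 + 1}.ncard := by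
        refine Set.ncard_le_ncard ?_ (hfin.subset fun _ h => h.1)
        rintro p ⟨hp, hr, hT⟩
        exact ⟨hp, by omega, hT⟩
    _ ≤ {p ∈ skewCells l m | p.1 < r ∧ T p = k + 1}.ncard := by
        rw [ncard_skewCells_row_lt_eq_sum, ncard_skewCells_row_lt_eq_sum]
        exact h r k
    _ ≤ _ := by
        refine Set.ncard_le_ncard ?_ (hfin.subset fun _ h => h.1)
        rintro p ⟨hp, hr, hT⟩
        exact ⟨hp, Or.inl hr, hT⟩

end FromProfile

open Classical in
noncomputable def ofProfile (l m : LRPartition) (F : ℕ → ℕ → ℕ) (p : ℕ × ℕ) : ℕ :=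
  if p ∈ skewCells l m then sInf {v | p.2 < m.parts p.1 + F p.1 v} else 0

theorem ofProfile_eq_zero {l m : LRPartition} {F : ℕ → ℕ → ℕ} {p : ℕ × ℕ}
    (hp : p ∉ skewCells l m) : ofProfile l m F p = 0 :=
  if_neg hp

namespace IsLRProfile

variable {l m : LRPartition} {F : ℕ → ℕ → ℕ}

theorem ofProfile_le_iff (hF : IsLRProfile l m F) {i c : ℕ} (hc : (i, c) ∈ skewCells l m)
    (v : ℕ) : ofProfile l m F (i, c) ≤ v ↔ c < m.parts i + F i v := by
  have hne : {v | c < m.parts i + F i v}.Nonempty := by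
    refine ⟨i + 1, ?_⟩
    have := hF.sub i
    have := (mem_skewCells.1 hc).2
    rw [Set.mem_ofPred_eq, hF.top i (i + 1) le_rfl]
    omega
  rw [ofProfile, if_pos hc]
  exact ⟨fun hv => (Nat.sInf_mem hne).trans_le (Nat.add_le_add_left (hF.mono i hv) _),
    fun hv => Nat.sInf_le hv⟩

theorem ofProfile_pos (hF : IsLRProfile l m F) {i c : ℕ} (hc : (i, c) ∈ skewCells l m) :
    0 < ofProfile l m F (i, c) := by
  by_contra! h0
  have h := (hF.ofProfile_le_iff hc 0).1 h0
  rw [hF.zero, add_zero] at h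
  exact (mem_skewCells.1 hc).1.not_gt h

theorem ofProfile_lt_ofProfile_succ (hF : IsLRProfile l m F) {i j : ℕ}
    (hc : (i, j) ∈ skewCells l m) (hc' : (i + 1, j) ∈ skewCells l m) :
    ofProfile l m F (i, j) < ofProfile l m F (i + 1, j) := by
  obtain ⟨w, hw⟩ : ∃ w, ofProfile l m F (i + 1, j) = w + 1 :=
    ⟨_, (Nat.succ_pred_eq_of_pos (hF.ofProfile_pos hc')).symm⟩
  have hbelow := (hF.ofProfile_le_iff hc' (w + 1)).1 hw.le
  have := hF.col i w
  rw [hw, Nat.lt_succ_iff, hF.ofProfile_le_iff hc]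
  omega

theorem rowProfile_ofProfile (hF : IsLRProfile l m F) : rowProfile l m (ofProfile l m F) = F := by
  funext i v
  have hrow : {c ∈ rowCells l m i | ofProfile l m F (i, c) ≤ v} =
      Ico (m.parts i) (m.parts i + F i v) := by
    ext c
    have := hF.apply_le i v
    rw [mem_filter, mem_rowCells, mem_Ico]
    constructor
    · rintro ⟨hc, hcv⟩
      exact ⟨hc.1, (hF.ofProfile_le_iff hc v).1 hcv⟩
    · rintro ⟨hmc, hcv⟩
      have hc : (i, c) ∈ skewCells l m := mem_skewCells.2 ⟨hmc, by omega⟩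
      exact ⟨hc, (hF.ofProfile_le_iff hc v).2 hcv⟩
  rw [rowProfile, hrow, Nat.card_Ico, Nat.add_sub_cancel_left]

theorem exists_isLRTableau_ofProfile (hF : IsLRProfile l m F) :
    ∃ ν, IsLRTableau l m ν (ofProfile l m F) := by
  obtain ⟨N, hN⟩ := l.eventually_zero
  have hrow := hF.rowProfile_ofProfile
  refine ⟨⟨fun k => ∑ i ∈ range N, (F i (k + 1) - F i k), ?_, ⟨N, fun k hk => ?_⟩⟩, ?_⟩
  · refine antitone_nat_of_succ_le fun k => le_trans ?_ (hF.lattice N k)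
    rw [sum_range_succ]
    exact Nat.le_add_right _ _
  · refine sum_eq_zero fun i hi => ?_
    have hi := mem_range.1 hi
    rw [hF.top i (k + 1) (by omega), hF.top i k (by omega), Nat.sub_self]
  refine
    { sub := hF.sub
      pos := fun _ hc => hF.ofProfile_pos hc
      zero := fun _ => ofProfile_eq_zero
      row_weak := fun i j j' hc hc' hjj' =>
        (hF.ofProfile_le_iff hc _).2 <| hjj'.trans_lt <| (hF.ofProfile_le_iff hc' _).1 le_rfl
      col_strict := col_strict_of_succ fun _ _ => hF.ofProfile_lt_ofProfile_succ
      content := fun k => by rw [ncard_skewCells_eq_sum hN, hrow]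
      lattice := lattice_of_isLatticeProfile (by rw [hrow]; exact hF.lattice) }

end IsLRProfile

namespace IsLRTableau

variable {l m ν : LRPartition} {T : ℕ × ℕ → ℕ}

theorem ofProfile_rowProfile (hT : IsLRTableau l m ν T) : ofProfile l m (rowProfile l m T) = T := by
  have hF := hT.isLRProfile_rowProfile
  funext p
  by_cases hp : p ∈ skewCells l m
  · obtain ⟨i, c⟩ := p
    refine le_antisymm ((hF.ofProfile_le_iff hp _).2 ((hT.le_iff_lt_rowProfile hp _).1 le_rfl))
      ((hT.le_iff_lt_rowProfile hp _).2 ((hF.ofProfile_le_iff hp _).1 le_rfl))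
  · rw [ofProfile_eq_zero hp, hT.zero p hp]

theorem content_unique {ν' : LRPartition} (hT : IsLRTableau l m ν T)
    (hT' : IsLRTableau l m ν' T) : ν = ν' :=
  LRPartition.parts_injective <| funext fun k => (hT.content k).symm.trans (hT'.content k)

end IsLRTableau

theorem finite_setOf_isLRTableau (l m : LRPartition) :
    {T | ∃ ν, IsLRTableau l m ν T}.Finite := by
  obtain ⟨N, hN⟩ := l.eventually_zero
  refine (Set.finite_setOf_support_subset_forall_le (finite_skewCells l m) N).subset ?_
  rintro T ⟨ν, hT⟩
  refine ⟨fun p hp => by_contra fun h => hp (hT.zero p h), fun p => ?_⟩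
  by_cases hp : p ∈ skewCells l m
  · exact (hT.le_succ_row hp).trans (lt_of_mem_skewCells hN hp)
  · exact (hT.zero p hp).trans_le (Nat.zero_le N)

theorem finsum_LRcoeff_eq_ncard (l m : LRPartition) :
    ∑ᶠ ν, LRcoeff l m ν = {T | ∃ ν, IsLRTableau l m ν T}.ncard := by
  rw [Set.ofPred_exists]
  exact finsum_ncard_eq_ncard_iUnion
    (fun ν ν' hνν' => Set.disjoint_left.2 fun _ hT hT' => hνν' (hT.content_unique hT'))
    (Set.ofPred_exists _ ▸ finite_setOf_isLRTableau l m)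

theorem lr_sum_add_ge_general (l m l' m' : LRPartition)
    (hml' : LRPartition.Sub m' l') :
    (∑ᶠ ν : LRPartition, LRcoeff l m ν) ≤
      ∑ᶠ ν' : LRPartition, LRcoeff (l + l') (m + m') ν' := by
  rw [finsum_LRcoeff_eq_ncard, finsum_LRcoeff_eq_ncard]
  set G := canonicalProfile l' m'
  have hF : ∀ {ν T}, IsLRTableau l m ν T →
      IsLRProfile (l + l') (m + m') (rowProfile l m T + G) :=
    fun hT => hT.isLRProfile_rowProfile.add (isLRProfile_canonicalProfile hml')
  refine Set.ncard_le_ncard_of_injOn (fun T => ofProfile (l + l') (m + m') (rowProfile l m T + G))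
    (fun T ⟨ν, hT⟩ => (hF hT).exists_isLRTableau_ofProfile) ?_ (finite_setOf_isLRTableau _ _)
  rintro T ⟨ν, hT⟩ T' ⟨ν', hT'⟩ hTT'
  have hprofile := congrArg (rowProfile (l + l') (m + m')) hTT'
  simp only [(hF hT).rowProfile_ofProfile, (hF hT').rowProfile_ofProfile, add_left_inj] at hprofile
  rw [← hT.ofProfile_rowProfile, ← hT'.ofProfile_rowProfile, hprofile]

/-- Lemma 3.4. For skew diagrams `λ/μ` and `λ'/μ'`,
`Σ_{ν'} c(λ+λ'; μ+μ', ν') ≥ Σ_ν c(λ;μ,ν)`. -/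
theorem lr_sum_add_ge (l m l' m' : LRPartition)
    (hml : LRPartition.Sub m l) (hml' : LRPartition.Sub m' l') :
    (∑ᶠ ν : LRPartition, LRcoeff l m ν) ≤
      ∑ᶠ ν' : LRPartition, LRcoeff (l + l') (m + m') ν' :=
  lr_sum_add_ge_general l m l' m' hml'
end
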